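/- arXiv:2510.12626 — 2 statements merged into one kernel-verified Lean document; each statement's English description precedes it below -/
import Mathlib

section
/- Suppose additionally that |α^{(i)}(x)|² ≤ ε for every i ∈ {1,…,k} and every x ∈ X. If P is drawn uniformly at random from the set of all functions X → {1,…,ℓ}, then E_P[ Σ_{x⃗ ∈ X^k such that P(x_1),…,P(x_k) are NOT pairwise distinct} w(x⃗) ] ≤ (k(k−1)/2)·(ε + 1/ℓ). In particular, whenever ζ^P_∅ ≠ 0, one has |⟨φ^P, φ^P_0⟩|² ≥ 1 − (k(k−1)/2)·(ε + 1/ℓ) on average over P. -/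
/-!
The expected weight of the colliding tuples is bounded by a union bound over the `k(k-1)/2`
pairs `i < j`. For a fixed pair, a uniformly random `P` merges two distinct points with
probability exactly `1/ℓ`, while `x_i = x_j` has weight `∑ₓ |α⁽ⁱ⁾(x)|²|α⁽ʲ⁾(x)|² ≤ ε`.
For the fidelity: `ζ^P_∅` is `φ^P` with some coordinates set to zero, so
`⟨φ^P, ζ^P_∅⟩ = ‖ζ^P_∅‖²` and `|⟨φ^P, φ^P_0⟩|² = ‖ζ^P_∅‖²`, which is `1` minus the weight of
the colliding tuples because `ψ̃_{P(x)}` are unit vectors.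
-/

open Finset

section ProductWeights

variable {ι X : Type*} [Fintype ι] [DecidableEq ι] [Fintype X]

theorem sum_prod_apply_eq_one {f : ι → X → ℝ} (hf1 : ∀ m, ∑ x, f m x = 1) :
    ∑ v : ι → X, ∏ m, f m (v m) = 1 := by
  simp [← Fintype.prod_sum, hf1]

variable [DecidableEq X]

/-- Once `v i = v j` is imposed, `v` is determined by its restriction away from `i`. -/
theorem sum_ite_apply_eq_apply_restrict {M : Type*} [AddCommMonoid M] {i j : ι} (hji : j ≠ i)
    (g : ({m // m ≠ i} → X) → M) :
    ∑ v : ι → X, (if v i = v j then g (fun m => v m) else 0) = ∑ u, g u := by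
  rw [← (Equiv.piSplitAt i fun _ => X).symm.sum_comp, Fintype.sum_prod_type, sum_comm]
  refine sum_congr rfl fun u _ => ?_
  simp only [ne_eq, Equiv.piSplitAt_symm_apply, ↓reduceDIte, hji, eq_rec_constant,
    Subtype.coe_eta, dite_eq_ite, sum_ite_eq', mem_univ, ↓reduceIte]
  congr 1
  funext m
  simp [m.2]

theorem sum_ite_apply_eq_prod_le {f : ι → X → ℝ} (hf0 : ∀ m x, 0 ≤ f m x)
    (hf1 : ∀ m, ∑ x, f m x = 1) {ε : ℝ} {i j : ι} (hij : i ≠ j) (hfε : ∀ x, f i x ≤ ε) :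
    ∑ v : ι → X, (if v i = v j then ∏ m, f m (v m) else 0) ≤ ε := by
  calc ∑ v : ι → X, (if v i = v j then ∏ m, f m (v m) else 0)
      ≤ ∑ v : ι → X, (if v i = v j then ε * ∏ m : {m // m ≠ i}, f m (v m) else 0) := by
        refine sum_le_sum fun v _ => ?_
        split_ifs
        · rw [Fintype.prod_eq_mul_prod_subtype_ne _ i]
          exact mul_le_mul_of_nonneg_right (hfε _) (prod_nonneg fun m _ => hf0 _ _)
        · rfl
    _ = ε * ∏ m : {m // m ≠ i}, ∑ x, f m x := by
        rw [sum_ite_apply_eq_apply_restrict hij.symm fun u => ε * ∏ m : {m // m ≠ i}, f m (u m),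
          ← mul_sum, Fintype.prod_sum]
    _ = ε := by simp [hf1]

theorem two_le_sum_offDiag_of_not_injective {β : Type*} [DecidableEq β] {g : ι → β}
    (hg : ¬ Function.Injective g) :
    2 ≤ ∑ p ∈ univ.offDiag, if g p.1 = g p.2 then (1 : ℝ) else 0 := by
  obtain ⟨a, b, hgab, hab⟩ := Function.not_injective_iff.mp hg
  rw [sum_boole]
  have hpair : {(a, b), (b, a)} ⊆ univ.offDiag.filter fun p : ι × ι => g p.1 = g p.2 := by
    simp [insert_subset_iff, hab, Ne.symm hab, hgab]
  have := card_le_card hpair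
  rw [card_pair (by simp [hab])] at this
  exact_mod_cast this

theorem sum_boole_apply_eq_apply {β : Type*} [Fintype β] [DecidableEq β] [Nonempty β] (a b : X) :
    (∑ P : X → β, if P a = P b then (1 : ℝ) else 0)
      = if a = b then (Fintype.card (X → β) : ℝ) else Fintype.card (X → β) / Fintype.card β := by
  split_ifs with hab
  · simp [hab]
  · rw [sum_ite_apply_eq_apply_restrict (X := β) (Ne.symm hab) fun _ => (1 : ℝ),
      Fintype.card_congr (Equiv.piSplitAt a fun _ => β), Fintype.card_prod]
    simp

theorem sum_sum_ite_comp_apply_eq_le {β : Type*} [Fintype β] [DecidableEq β] [Nonempty β]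
    {f : ι → X → ℝ} (hf0 : ∀ m x, 0 ≤ f m x) (hf1 : ∀ m, ∑ x, f m x = 1) {ε : ℝ} {i j : ι}
    (hij : i ≠ j) (hfε : ∀ x, f i x ≤ ε) :
    ∑ P : X → β, ∑ v : ι → X, (if P (v i) = P (v j) then ∏ m, f m (v m) else 0)
      ≤ Fintype.card (X → β) * (ε + 1 / Fintype.card β) := by
  set N : ℝ := (Fintype.card (X → β) : ℝ) with hN_def
  calc ∑ P : X → β, ∑ v : ι → X, (if P (v i) = P (v j) then ∏ m, f m (v m) else 0)
      = ∑ v : ι → X, (∏ m, f m (v m)) * ∑ P : X → β, if P (v i) = P (v j) then 1 else 0 := by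
        rw [sum_comm]
        simp only [mul_sum, mul_boole]
    _ ≤ ∑ v : ι → X, (N * (if v i = v j then ∏ m, f m (v m) else 0)
          + N / Fintype.card β * ∏ m, f m (v m)) := by
        refine sum_le_sum fun v _ => ?_
        have hW : 0 ≤ ∏ m, f m (v m) := prod_nonneg fun m _ => hf0 _ _
        have hN : 0 ≤ N / Fintype.card β * ∏ m, f m (v m) := by positivity
        rw [sum_boole_apply_eq_apply, ← hN_def]
        split_ifs <;> linarith [mul_comm N (∏ m, f m (v m))]
    _ ≤ N * ε + N / Fintype.card β := by
        rw [sum_add_distrib, ← mul_sum, ← mul_sum, sum_prod_apply_eq_one hf1, mul_one]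
        gcongr
        exact sum_ite_apply_eq_prod_le hf0 hf1 hij hfε
    _ = N * (ε + 1 / Fintype.card β) := by ring

theorem sum_sum_filter_not_injective_le {β : Type*} [Fintype β] [DecidableEq β] [Nonempty β]
    {f : ι → X → ℝ} (hf0 : ∀ m x, 0 ≤ f m x) (hf1 : ∀ m, ∑ x, f m x = 1) {ε : ℝ}
    (hfε : ∀ m x, f m x ≤ ε) :
    ∑ P : X → β, ∑ v ∈ univ.filter (fun v : ι → X => ¬ Function.Injective fun m => P (v m)),
        ∏ m, f m (v m)
      ≤ Fintype.card (X → β) * ((Fintype.card ι * (Fintype.card ι - 1) / 2)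
          * (ε + 1 / Fintype.card β)) := by
  have hunion : ∀ (P : X → β) (v : ι → X),
      (if ¬ Function.Injective (fun m => P (v m)) then ∏ m, f m (v m) else 0)
        ≤ ∑ p ∈ univ.offDiag, (1 / 2 : ℝ) *
            if P (v p.1) = P (v p.2) then ∏ m, f m (v m) else 0 := by
    intro P v
    have hW : 0 ≤ ∏ m, f m (v m) := prod_nonneg fun m _ => hf0 _ _
    -- a collision `P (v a) = P (v b)` is seen by both ordered pairs `(a, b)` and `(b, a)`
    by_cases hP : Function.Injective fun m => P (v m)
    · rw [if_neg (not_not_intro hP)]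
      exact sum_nonneg fun p _ => mul_nonneg (by norm_num) (by split_ifs <;> simp [hW])
    · have h2 := two_le_sum_offDiag_of_not_injective hP
      rw [if_pos hP]
      calc ∏ m, f m (v m) ≤ (∏ m, f m (v m)) / 2 *
            ∑ p ∈ univ.offDiag, if P (v p.1) = P (v p.2) then (1 : ℝ) else 0 := by nlinarith
        _ = _ := by
          rw [mul_sum]
          exact sum_congr rfl fun p _ => by split_ifs <;> ring
  calc ∑ P : X → β, ∑ v ∈ univ.filter (fun v : ι → X => ¬ Function.Injective fun m => P (v m)),
        ∏ m, f m (v m)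
      ≤ ∑ P : X → β, ∑ v : ι → X, ∑ p ∈ univ.offDiag, (1 / 2 : ℝ) *
          if P (v p.1) = P (v p.2) then ∏ m, f m (v m) else 0 := by
        simp only [sum_filter]
        exact sum_le_sum fun P _ => sum_le_sum fun v _ => hunion P v
    _ = ∑ p ∈ univ.offDiag, (1 / 2 : ℝ) * ∑ P : X → β, ∑ v : ι → X,
          if P (v p.1) = P (v p.2) then ∏ m, f m (v m) else 0 := by
        simp only [mul_sum]
        exact (sum_congr rfl fun P _ => sum_comm).trans sum_comm
    _ ≤ ∑ p ∈ (univ : Finset ι).offDiag, (1 / 2 : ℝ) *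
          (Fintype.card (X → β) * (ε + 1 / Fintype.card β)) := by
        refine sum_le_sum fun p hp => ?_
        gcongr
        exact sum_sum_ite_comp_apply_eq_le hf0 hf1 (mem_offDiag.mp hp).2.2 (hfε p.1)
    _ = _ := by
        rw [sum_const, offDiag_card, card_univ, nsmul_eq_mul,
          Nat.cast_sub (Nat.le_mul_self _), Nat.cast_mul]
        ring

end ProductWeights

theorem normSq_sum_conj_mul_div_sqrt {Z : Type*} [Fintype Z] {φ ζ : Z → ℂ}
    (h : ∀ z, ζ z = φ z ∨ ζ z = 0) :
    Complex.normSq (∑ z, starRingEnd ℂ (φ z) *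
        (ζ z / ((Real.sqrt (∑ z', Complex.normSq (ζ z')) : ℝ) : ℂ)))
      = ∑ z, Complex.normSq (ζ z) := by
  set S := ∑ z', Complex.normSq (ζ z')
  have hterm : ∀ z, starRingEnd ℂ (φ z) * ζ z = (Complex.normSq (ζ z) : ℂ) := fun z => by
    rcases h z with hz | hz <;> simp [hz, Complex.normSq_eq_conj_mul_self]
  have hsum : ∑ z, starRingEnd ℂ (φ z) * (ζ z / ((Real.sqrt S : ℝ) : ℂ))
      = (S : ℂ) / ((Real.sqrt S : ℝ) : ℂ) := by
    simp only [← mul_div_assoc, ← sum_div, hterm, S, Complex.ofReal_sum]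
  rw [hsum, Complex.normSq_div, Complex.normSq_ofReal, Complex.normSq_ofReal,
    Real.mul_self_sqrt (sum_nonneg fun z _ => Complex.normSq_nonneg _), mul_self_div_self]

theorem sum_normSq_ite_prod {ι X Y : Type*} [Fintype ι] [DecidableEq ι] [Fintype X] [Fintype Y]
    (S : (ι → X) → Prop) [DecidablePred S] (c : ι → X → Y → ℂ) :
    ∑ z : ι → X × Y, Complex.normSq
        (if S (fun j => (z j).1) then ∏ j, c j (z j).1 (z j).2 else 0)
      = ∑ v ∈ univ.filter S, ∏ j, ∑ y, Complex.normSq (c j (v j) y) := by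
  rw [← (Equiv.arrowProdEquivProdArrow ι (fun _ => X) fun _ => Y).symm.sum_comp,
    Fintype.sum_prod_type, sum_filter]
  refine sum_congr rfl fun v _ => ?_
  by_cases hS : S v <;> simp [Equiv.arrowProdEquivProdArrow, Fintype.prod_sum, hS]

theorem stmt4_general {X Y : Type} [Fintype X] [DecidableEq X] [Fintype Y]
    (k l : ℕ) (hl : 1 ≤ l) (ε : ℝ)
    (ψ : Fin l → Y → ℂ) (hψ : ∀ i, ∑ y, Complex.normSq (ψ i y) = 1)
    (α : Fin k → X → ℂ) (hα : ∀ i, ∑ x, Complex.normSq (α i x) = 1)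
    (hαε : ∀ i x, Complex.normSq (α i x) ≤ ε)
    (w : (Fin k → X) → ℝ) (hw : ∀ v, w v = ∏ j, Complex.normSq (α j (v j)))
    (φ : (X → Fin l) → (Fin k → X × Y) → ℂ)
    (hφ : ∀ P z, φ P z = ∏ j, α j (z j).1 * ψ (P (z j).1) (z j).2)
    (ζ : (X → Fin l) → (Fin k → X × Y) → ℂ)
    (hζ : ∀ P z, ζ P z = if Function.Injective (fun j => P ((z j).1)) then φ P z else 0) :
    ((∑ P : X → Fin l, ∑ v ∈ Finset.univ.filter
        (fun v : Fin k → X => ¬ Function.Injective (fun j => P (v j))), w v)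
      / (Fintype.card (X → Fin l) : ℝ)
      ≤ ((k : ℝ) * ((k : ℝ) - 1) / 2) * (ε + 1 / l)) ∧
    (∀ fid : (X → Fin l) → ℝ,
      (∀ P, 0 ≤ fid P) →
      (∀ P, ζ P ≠ 0 →
        fid P = Complex.normSq (∑ z, (starRingEnd ℂ) (φ P z) *
          (ζ P z / ((Real.sqrt (∑ z', Complex.normSq (ζ P z')) : ℝ) : ℂ)))) →
      1 - ((k : ℝ) * ((k : ℝ) - 1) / 2) * (ε + 1 / l)
        ≤ (∑ P : X → Fin l, fid P) / (Fintype.card (X → Fin l) : ℝ)) := by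
  have : Nonempty (Fin l) := ⟨⟨0, hl⟩⟩
  have hN : (0 : ℝ) < Fintype.card (X → Fin l) := by exact_mod_cast Fintype.card_pos
  set bad : (X → Fin l) → ℝ := fun P => ∑ v ∈ univ.filter
    (fun v : Fin k → X => ¬ Function.Injective (fun j => P (v j))), w v
  have hbad : ∑ P, bad P
      ≤ Fintype.card (X → Fin l) * ((k * (k - 1) / 2) * (ε + 1 / l)) := by
    simpa [bad, hw] using sum_sum_filter_not_injective_le (β := Fin l)
      (fun m x => Complex.normSq_nonneg (α m x)) hα hαε
  have hmass : ∑ v, w v = 1 := by simp only [hw]; exact sum_prod_apply_eq_one hα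
  have hgood : ∀ P, ∑ z, Complex.normSq (ζ P z) = 1 - bad P := fun P => by
    rw [← hmass, ← sum_filter_add_sum_filter_not univ
      (fun v : Fin k → X => Function.Injective fun j => P (v j)), add_sub_cancel_right]
    simp only [hζ, hφ]
    refine (sum_normSq_ite_prod (fun v : Fin k → X => Function.Injective fun j => P (v j))
      fun j x y => α j x * ψ (P x) y).trans (sum_congr rfl fun v _ => ?_)
    simp only [Complex.normSq_mul, ← mul_sum, hψ, mul_one, hw]
  refine ⟨(div_le_iff₀ hN).2 (by linarith), fun fid hfid0 hfid => (le_div_iff₀ hN).2 ?_⟩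
  have hfid_ge : ∀ P, 1 - bad P ≤ fid P := by
    intro P
    rw [← hgood P]
    by_cases hζP : ζ P = 0
    · simp [hζP, hfid0]
    · rw [hfid P hζP, normSq_sum_conj_mul_div_sqrt fun z => by rw [hζ]; split_ifs <;> simp]
  calc (1 - (k * (k - 1) / 2) * (ε + 1 / l)) * Fintype.card (X → Fin l)
      ≤ ∑ P, (1 - bad P) := by
        rw [sum_sub_distrib, sum_const, card_univ, nsmul_eq_mul]; linarith
    _ ≤ ∑ P, fid P := sum_le_sum fun P _ => hfid_ge P

/-- Assume additionally `|α^{(i)}(x)|² ≤ ε` for all `i, x`. Over a uniformly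
random `P : X → Fin l`,
`E_P[ Σ_{x⃗ : P(x_1),…,P(x_k) not pairwise distinct} w(x⃗) ] ≤ (k(k−1)/2)·(ε + 1/l)`.
In particular, any nonnegative quantity `fid` that agrees with the squared fidelity
`|⟨φ^P, φ^P_0⟩|²` whenever `ζ^P_∅ ≠ 0` satisfies
`E_P[fid P] ≥ 1 − (k(k−1)/2)·(ε + 1/l)`. -/
theorem stmt4 {X Y : Type} [Fintype X] [DecidableEq X] [Fintype Y] [Nonempty X] [Nonempty Y]
    (k l : ℕ) (hk : 1 ≤ k) (hl : 1 ≤ l) (ε : ℝ) (hε : 0 ≤ ε)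
    (ψ : Fin l → Y → ℂ) (hψ : ∀ i, ∑ y, Complex.normSq (ψ i y) = 1)
    (α : Fin k → X → ℂ) (hα : ∀ i, ∑ x, Complex.normSq (α i x) = 1)
    (hαε : ∀ i x, Complex.normSq (α i x) ≤ ε)
    (w : (Fin k → X) → ℝ) (hw : ∀ v, w v = ∏ j, Complex.normSq (α j (v j)))
    (φ : (X → Fin l) → (Fin k → X × Y) → ℂ)
    (hφ : ∀ P z, φ P z = ∏ j, α j (z j).1 * ψ (P (z j).1) (z j).2)
    (ζ : (X → Fin l) → (Fin k → X × Y) → ℂ)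
    (hζ : ∀ P z, ζ P z = if Function.Injective (fun j => P ((z j).1)) then φ P z else 0) :
    ((∑ P : X → Fin l, ∑ v ∈ Finset.univ.filter
        (fun v : Fin k → X => ¬ Function.Injective (fun j => P (v j))), w v)
      / (Fintype.card (X → Fin l) : ℝ)
      ≤ ((k : ℝ) * ((k : ℝ) - 1) / 2) * (ε + 1 / l)) ∧
    (∀ fid : (X → Fin l) → ℝ,
      (∀ P, 0 ≤ fid P) →
      (∀ P, ζ P ≠ 0 →
        fid P = Complex.normSq (∑ z, (starRingEnd ℂ) (φ P z) *
          (ζ P z / ((Real.sqrt (∑ z', Complex.normSq (ζ P z')) : ℝ) : ℂ)))) →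
      1 - ((k : ℝ) * ((k : ℝ) - 1) / 2) * (ε + 1 / l)
        ≤ (∑ P : X → Fin l, fid P) / (Fintype.card (X → Fin l) : ℝ)) :=
  stmt4_general k l hl ε ψ hψ α hα hαε w hw φ hφ ζ hζ
end

section
/- Let R be a nonempty finite set, and for each r ∈ R and each i ∈ {1,…,n} let M_r^{(i)} ∈ M_{X_i}(ℂ) be an orthogonal projection. Set P^{(i)} = (1/|R|)·Σ_{r∈R} M_r^{(i)}, let η ∈ [0,1], and let Π^{(i)} be the orthogonal projection onto the sum of the eigenspaces of P^{(i)} corresponding to eigenvalues strictly greater than η. Then for every Hermitian positive semidefinite matrix ρ on ℂ^{X_1×⋯×X_n} with trace 1: (1/|R|)·Σ_{r∈R} Tr[ (M_r^{(1)} ⊗ ⋯ ⊗ M_r^{(n)}) ρ (M_r^{(1)} ⊗ ⋯ ⊗ M_r^{(n)}) ] ≤ (n+1)·( η + Tr[ (Π^{(1)} ⊗ ⋯ ⊗ Π^{(n)}) ρ ] ). -/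
/-!
Let `S` be the average of the projections `N_r = ⊗ᵢ M_r⁽ⁱ⁾`, `E = ⊗ᵢ Π⁽ⁱ⁾` and `F = 1 - E`.
Since `N_r ≤ 1 ⊗ ⋯ ⊗ M_r⁽ᵏ⁾ ⊗ ⋯ ⊗ 1`, the operator `S` is dominated by `P⁽ᵏ⁾` placed in slot `k`,
for every `k`. Telescoping writes `F = ∑ₘ Qₘ` with
`Qₘ = Π⁽¹⁾ ⊗ ⋯ ⊗ Π⁽ᵐ⁻¹⁾ ⊗ (1 - Π⁽ᵐ⁾) ⊗ 1 ⊗ ⋯ ⊗ 1`; as `(1 - Π) P (1 - Π) ≤ η (1 - Π)` by the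
spectral description of `Π`, each `Qₘ S Qₘ ≤ η Qₘ`, and the operator Cauchy–Schwarz inequality
gives `F S F ≤ n η`. Finally `(t E - F) S (t E - F) ≥ 0` yields
`t S ≤ t (t + 1) E S E + (t + 1) F S F`; with `t = n` and `E S E ≤ E` this is
`S ≤ (n + 1) (E + η)`, and it remains to take the trace against `ρ`.
-/

open scoped ComplexOrder MatrixOrder
open Finset Function

section StarOrderedAlgebra

variable {A : Type*} [Ring A] [StarRing A] [PartialOrder A] [StarOrderedRing A] [Algebra ℝ A]

theorem smul_le_compress_add_compress [StarModule ℝ A] {s e : A} (hs : 0 ≤ s)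
    (he : IsSelfAdjoint e) (t : ℝ) :
    t • s ≤ (t * (t + 1)) • (e * s * e) + (t + 1) • ((1 - e) * s * (1 - e)) := by
  -- the difference is `b * s * b` for `b = t • e - (1 - e)`
  rw [← sub_nonneg]
  have hb : IsSelfAdjoint (t • e - (1 - e)) :=
    ((IsSelfAdjoint.all t).smul he).sub ((IsSelfAdjoint.one A).sub he)
  convert star_left_conjugate_nonneg hs (t • e - (1 - e)) using 1
  rw [hb.star_eq]
  simp only [sub_mul, mul_sub, smul_mul_assoc, mul_smul_comm, one_mul, mul_one, smul_sub,
    mul_add, smul_smul]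
  module

theorem le_smul_add_of_compress_le [StarModule ℝ A] {s e : A} (hs : 0 ≤ s)
    (he : IsStarProjection e) (hs1 : s ≤ 1) {t b : ℝ} (ht : 0 < t)
    (hf : (1 - e) * s * (1 - e) ≤ (t * b) • 1) :
    s ≤ (t + 1) • (e + b • 1) := by
  have hese : e * s * e ≤ e := by
    simpa [he.isSelfAdjoint.star_eq, he.isIdempotentElem.eq] using
      star_left_conjugate_le_conjugate hs1 e
  rw [← smul_le_smul_iff_of_pos_left ht]
  calc t • s ≤ (t * (t + 1)) • (e * s * e) + (t + 1) • ((1 - e) * s * (1 - e)) :=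
        smul_le_compress_add_compress hs he.isSelfAdjoint t
    _ ≤ (t * (t + 1)) • e + (t + 1) • ((t * b) • 1) := by gcongr
    _ = t • ((t + 1) • (e + b • 1)) := by module

theorem star_sum_mul_mul_sum_le [StarModule ℝ A] {ι : Type*} (I : Finset ι) {s : A}
    (hs : 0 ≤ s) (b : ι → A) :
    star (∑ i ∈ I, b i) * s * ∑ i ∈ I, b i ≤ (#I : ℝ) • ∑ i ∈ I, star (b i) * s * b i := by
  set x : ι → ι → A := fun i j => star (b i) * s * b j
  have hpos : 0 ≤ ∑ i ∈ I, ∑ j ∈ I, (x i i - x i j - x j i + x j j) := by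
    refine sum_nonneg fun i _ => sum_nonneg fun j _ => ?_
    convert star_left_conjugate_nonneg hs (b i - b j) using 1
    simp only [x, star_sub, sub_mul, mul_sub]
    abel
  have hcross : star (∑ i ∈ I, b i) * s * ∑ i ∈ I, b i = ∑ i ∈ I, ∑ j ∈ I, x i j := by
    simp only [x, star_sum, sum_mul, mul_sum]
    exact sum_comm
  have hdiag : ∑ i ∈ I, ∑ j ∈ I, x j j = (#I : ℝ) • ∑ i ∈ I, x i i := by
    rw [sum_const, Nat.cast_smul_eq_nsmul]
  have hdiag' : ∑ i ∈ I, ∑ j ∈ I, x i i = (#I : ℝ) • ∑ i ∈ I, x i i := by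
    rw [← hdiag, sum_comm]
  simp only [sum_add_distrib, sum_sub_distrib, hdiag, hdiag'] at hpos
  rw [sum_comm (f := fun i j => x j i), ← hcross] at hpos
  rw [← sub_nonneg]
  refine (smul_nonneg_iff_nonneg_of_pos_left (two_pos (α := ℝ))).mp ?_
  convert hpos using 1
  module

theorem sum_mul_mul_sum_le_smul_sum [StarModule ℝ A] {ι : Type*} (I : Finset ι) {s : A} (hs : 0 ≤ s)
    {q : ι → A} (hq : ∀ i ∈ I, IsSelfAdjoint (q i)) {c : ℝ}
    (hqs : ∀ i ∈ I, q i * s * q i ≤ c • q i) :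
    (∑ i ∈ I, q i) * s * ∑ i ∈ I, q i ≤ (#I * c) • ∑ i ∈ I, q i := by
  have hstar : star (∑ i ∈ I, q i) = ∑ i ∈ I, q i := (isSelfAdjoint_sum I hq).star_eq
  calc (∑ i ∈ I, q i) * s * ∑ i ∈ I, q i
      ≤ (#I : ℝ) • ∑ i ∈ I, star (q i) * s * q i := by
        simpa only [hstar] using star_sum_mul_mul_sum_le I hs q
    _ ≤ (#I : ℝ) • ∑ i ∈ I, c • q i := by
        gcongr with i hi
        rw [(hq i hi).star_eq]
        exact hqs i hi
    _ = (#I * c) • ∑ i ∈ I, q i := by rw [← smul_sum, smul_smul]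

theorem IsStarProjection.mul_mul_le_smul {s p w q : A} {c : ℝ} (hq : IsStarProjection q)
    (hw : IsSelfAdjoint w) (hwq : w * q = q) (hs : s ≤ p) (hp : w * p * w ≤ c • w) :
    q * s * q ≤ c • q := by
  have hqw : q * w = q := by
    simpa only [star_mul, hw.star_eq, hq.isSelfAdjoint.star_eq] using congrArg star hwq
  calc q * s * q ≤ q * p * q := by
        simpa only [hq.isSelfAdjoint.star_eq] using star_left_conjugate_le_conjugate hs q
    _ = q * w * p * (w * q) := by rw [hqw, hwq]
    _ = q * (w * p * w) * q := by simp only [mul_assoc]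
    _ ≤ q * (c • w) * q := by
        simpa only [hq.isSelfAdjoint.star_eq] using star_left_conjugate_le_conjugate hp q
    _ = c • q := by rw [mul_smul_comm, smul_mul_assoc, hqw, hq.isIdempotentElem.eq]

end StarOrderedAlgebra

namespace Matrix

section Spectral

variable {Y 𝕜 : Type*} [DecidableEq Y] [RCLike 𝕜]

theorem diagonal_le_diagonal {d e : Y → 𝕜} (h : d ≤ e) : diagonal d ≤ diagonal e := by
  rw [le_iff, diagonal_sub]
  exact PosSemidef.diagonal (sub_nonneg.mpr h)

variable [Fintype Y]

theorem isStarProjection_diagonal {d : Y → 𝕜} (hd : ∀ a, IsStarProjection (d a)) :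
    IsStarProjection (diagonal d) := by
  constructor
  · rw [IsIdempotentElem, diagonal_mul_diagonal]
    exact congrArg diagonal (funext fun a => (hd a).isIdempotentElem)
  · rw [IsSelfAdjoint, star_eq_conjTranspose, diagonal_conjTranspose]
    exact congrArg diagonal (funext fun a => (hd a).isSelfAdjoint)

theorem compress_diagonal_indicator_le (μ : Y → ℝ) (η : ℝ) :
    (1 - diagonal (fun a => if η < μ a then (1 : 𝕜) else 0)) * diagonal (fun a => (μ a : 𝕜))
        * (1 - diagonal (fun a => if η < μ a then (1 : 𝕜) else 0))
      ≤ η • (1 - diagonal (fun a => if η < μ a then (1 : 𝕜) else 0)) := by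
  rw [← diagonal_one, diagonal_sub, diagonal_mul_diagonal, diagonal_mul_diagonal,
    ← diagonal_smul]
  refine diagonal_le_diagonal fun a => ?_
  by_cases h : η < μ a
  · simp [h]
  · simpa [h, RCLike.real_smul_eq_coe_mul] using not_lt.mp h

theorem isStarProjection_and_compress_le_of_eq_conj_diagonal {U P Q : Matrix Y Y 𝕜}
    (hU : U ∈ unitaryGroup Y 𝕜) {μ : Y → ℝ} {η : ℝ}
    (hP : P = U * diagonal (fun a => (μ a : 𝕜)) * Uᴴ)
    (hQ : Q = U * diagonal (fun a => if η < μ a then (1 : 𝕜) else 0) * Uᴴ) :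
    IsStarProjection Q ∧ (1 - Q) * P * (1 - Q) ≤ η • (1 - Q) := by
  set φ := Unitary.conjStarAlgAut 𝕜 (Matrix Y Y 𝕜) ⟨U, hU⟩
  have hφ : ∀ A, φ A = U * A * Uᴴ := fun A => rfl
  rw [← hφ] at hP hQ
  refine ⟨hQ ▸ (isStarProjection_diagonal fun a => ?_).map φ, ?_⟩
  · split_ifs
    exacts [.one _, .zero _]
  · have := OrderHomClass.mono φ (compress_diagonal_indicator_le μ η)
    rwa [RCLike.real_smul_eq_coe_smul (K := 𝕜), map_smul, ← RCLike.real_smul_eq_coe_smul,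
      map_mul, map_mul, map_sub, map_one, ← hP, ← hQ] at this

end Spectral

section Trace

variable {Y 𝕜 : Type*} [Fintype Y] [DecidableEq Y] [RCLike 𝕜]

theorem PosSemidef.trace_mul_nonneg {A B : Matrix Y Y 𝕜} (hA : A.PosSemidef)
    (hB : B.PosSemidef) : 0 ≤ (A * B).trace := by
  open scoped Matrix.Norms.L2Operator in
  obtain ⟨C, rfl⟩ := CStarAlgebra.nonneg_iff_eq_star_mul_self.mp hA.nonneg
  rw [star_eq_conjTranspose, trace_mul_cycle, trace_mul_cycle]
  exact (hB.mul_mul_conjTranspose_same C).trace_nonneg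

theorem trace_mul_le_trace_mul {A B ρ : Matrix Y Y 𝕜} (hAB : A ≤ B) (hρ : ρ.PosSemidef) :
    (A * ρ).trace ≤ (B * ρ).trace := by
  rw [← sub_nonneg, ← trace_sub, ← sub_mul]
  exact PosSemidef.trace_mul_nonneg hAB hρ

end Trace

section PiKron

variable {ι R : Type*} [Fintype ι] {X : ι → Type*} [CommSemiring R]

theorem prod_update_apply_apply [DecidableEq ι] (A : ∀ i, Matrix (X i) (X i) R) (k : ι)
    (B : Matrix (X k) (X k) R) (x y : ∀ i, X i) :
    ∏ i, update A k B i (x i) (y i) = B (x k) (y k) * ∏ i ∈ univ.erase k, A i (x i) (y i) := by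
  rw [← mul_prod_erase univ _ (mem_univ k), update_self]
  congr 1
  exact prod_congr rfl fun i hi => by rw [update_of_ne (ne_of_mem_erase hi)]

def piKron :
    MultilinearMap R (fun i => Matrix (X i) (X i) R) (Matrix (∀ i, X i) (∀ i, X i) R) where
  toFun A := of fun x y => ∏ i, A i (x i) (y i)
  map_update_add' A k B C := by
    ext x y
    simp only [of_apply, add_apply, prod_update_apply_apply, add_mul]
  map_update_smul' A k c B := by
    ext x y
    simp only [of_apply, smul_apply, prod_update_apply_apply, smul_eq_mul, mul_assoc]

@[simp]
theorem piKron_apply (A : ∀ i, Matrix (X i) (X i) R) (x y : ∀ i, X i) :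
    piKron A x y = ∏ i, A i (x i) (y i) := rfl

theorem piKron_one [∀ i, DecidableEq (X i)] : piKron (1 : ∀ i, Matrix (X i) (X i) R) = 1 := by
  ext x y
  simp [one_apply, funext_iff, prod_boole]

theorem conjTranspose_piKron [StarRing R] (A : ∀ i, Matrix (X i) (X i) R) :
    (piKron A)ᴴ = piKron (star A) := by
  ext x y
  simp [star_prod]

variable [DecidableEq ι] [∀ i, Fintype (X i)]

theorem piKron_mul (A B : ∀ i, Matrix (X i) (X i) R) : piKron A * piKron B = piKron (A * B) := by
  ext x y
  simp [mul_apply, prod_mul_distrib, Fintype.prod_sum]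

theorem isStarProjection_piKron [StarRing R] {A : ∀ i, Matrix (X i) (X i) R}
    (hA : ∀ i, IsStarProjection (A i)) : IsStarProjection (piKron A) := by
  constructor
  · rw [IsIdempotentElem, piKron_mul]
    exact congrArg piKron (funext fun i => (hA i).isIdempotentElem)
  · rw [IsSelfAdjoint, star_eq_conjTranspose, conjTranspose_piKron]
    exact congrArg piKron (funext fun i => (hA i).isSelfAdjoint)

theorem isStarProjection_piKron_update [StarRing R] {A : ∀ i, Matrix (X i) (X i) R}
    (hA : ∀ i, IsStarProjection (A i)) {k : ι} {B : Matrix (X k) (X k) R}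
    (hB : IsStarProjection B) : IsStarProjection (piKron (update A k B)) :=
  isStarProjection_piKron fun i => by
    rcases eq_or_ne i k with rfl | hik
    · simpa using hB
    · simpa [hik] using hA i

variable [∀ i, DecidableEq (X i)] [StarRing R]

def piKronSingle (k : ι) : Matrix (X k) (X k) R →⋆ₐ[R] Matrix (∀ i, X i) (∀ i, X i) R where
  toFun B := piKron (Pi.mulSingle k B)
  map_one' := by rw [Pi.mulSingle_one, piKron_one]
  map_mul' B C := by rw [piKron_mul, Pi.mulSingle_mul]
  map_zero' := (piKron.toLinearMap 1 k).map_zero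
  map_add' := (piKron.toLinearMap 1 k).map_add
  commutes' r := by
    rw [Algebra.algebraMap_eq_smul_one, Algebra.algebraMap_eq_smul_one, ← piKron_one,
      ← Pi.mulSingle_one k]
    exact (piKron.toLinearMap 1 k).map_smul r 1
  map_star' B := by
    simp only [star_eq_conjTranspose, conjTranspose_piKron, Pi.mulSingle, ← update_star,
      star_one]

theorem piKronSingle_apply (k : ι) (B : Matrix (X k) (X k) R) :
    piKronSingle k B = piKron (update 1 k B) := rfl

theorem piKronSingle_mul_piKron_update {k : ι} {B : Matrix (X k) (X k) R}
    (hB : IsIdempotentElem B) (A : ∀ i, Matrix (X i) (X i) R) :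
    piKronSingle k B * piKron (update A k B) = piKron (update A k B) := by
  rw [piKronSingle_apply, piKron_mul, ← update_mul, one_mul, hB.eq]

theorem piKron_le_piKronSingle {𝕜 : Type*} [RCLike 𝕜] {M : ∀ i, Matrix (X i) (X i) 𝕜}
    (hM : ∀ i, IsStarProjection (M i)) (k : ι) : piKron M ≤ piKronSingle k (M k) := by
  refine (isStarProjection_piKron hM).le_of_mul_eq_left ((hM k).map _) ?_
  rw [piKronSingle_apply, piKron_mul]
  congr 1
  funext i
  rcases eq_or_ne i k with rfl | hik
  · simp [(hM i).isIdempotentElem.eq]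
  · simp [hik]

end PiKron

section Telescope

variable {n : ℕ} {X : Fin n → Type*} [∀ i, DecidableEq (X i)] {R : Type*} [CommRing R]

theorem sum_piKron_update_one_sub (P : ∀ i, Matrix (X i) (X i) R) :
    ∑ m : Fin n, piKron (update (fun i => if i < m then P i else 1) m (1 - P m))
      = 1 - piKron P := by
  set A : ℕ → Matrix (∀ i, X i) (∀ i, X i) R :=
    fun m => piKron fun i => if (i : ℕ) < m then P i else 1
  have hstep : ∀ m : Fin n,
      piKron (update (fun i => if i < m then P i else 1) m (1 - P m)) = A m - A (m + 1) := by
    intro m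
    rw [← MultilinearMap.toLinearMap_apply, map_sub, MultilinearMap.toLinearMap_apply,
      MultilinearMap.toLinearMap_apply]
    congr 2 <;> funext i <;> rcases eq_or_ne i m with rfl | him
    · simp
    · simp [him]
    · simp
    · simp [him, le_iff_lt_or_eq, Fin.val_ne_of_ne him]
  rw [sum_congr rfl fun m _ => hstep m, Fin.sum_univ_eq_sum_range (fun m => A m - A (m + 1)),
    sum_range_sub']
  congr 1
  · simp only [A, Nat.not_lt_zero, if_false]
    exact piKron_one
  · simp [A]

end Telescope

section Bound

variable {ι : Type*} [Fintype ι] [DecidableEq ι] {X : ι → Type*} [∀ i, Fintype (X i)]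
  [∀ i, DecidableEq (X i)] {𝕜 : Type*} [RCLike 𝕜]

theorem piKron_update_mul_mul_le {s : Matrix (∀ i, X i) (∀ i, X i) 𝕜} {k : ι}
    {P Q : Matrix (X k) (X k) 𝕜} {η : ℝ} (hs : s ≤ piKronSingle k P) (hQ : IsStarProjection Q)
    (hPQ : (1 - Q) * P * (1 - Q) ≤ η • (1 - Q)) {A : ∀ i, Matrix (X i) (X i) 𝕜}
    (hA : ∀ i, IsStarProjection (A i)) :
    piKron (update A k (1 - Q)) * s * piKron (update A k (1 - Q))
      ≤ η • piKron (update A k (1 - Q)) := by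
  refine (isStarProjection_piKron_update hA hQ.one_sub).mul_mul_le_smul
    (hQ.one_sub.map (piKronSingle k)).isSelfAdjoint
    (piKronSingle_mul_piKron_update hQ.one_sub.isIdempotentElem A) hs ?_
  have := OrderHomClass.mono (piKronSingle k) hPQ
  rwa [RCLike.real_smul_eq_coe_smul (K := 𝕜), map_smul, ← RCLike.real_smul_eq_coe_smul,
    map_mul, map_mul] at this

end Bound

section Average

variable {n : ℕ} {X : Fin n → Type*} [∀ i, Fintype (X i)] [∀ i, DecidableEq (X i)]
  {𝕜 : Type*} [RCLike 𝕜] {R : Type*} [Fintype R] [Nonempty R]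

theorem inv_card_smul_sum_piKron_le (hn : 0 < n) {M : R → ∀ i, Matrix (X i) (X i) 𝕜}
    (hM : ∀ r i, IsStarProjection (M r i)) {P Q : ∀ i, Matrix (X i) (X i) 𝕜}
    (hP : ∀ i, P i = (Fintype.card R : 𝕜)⁻¹ • ∑ r, M r i) (hQ : ∀ i, IsStarProjection (Q i))
    {η : ℝ} (hη : 0 ≤ η) (hPQ : ∀ i, (1 - Q i) * P i * (1 - Q i) ≤ η • (1 - Q i)) :
    (Fintype.card R : 𝕜)⁻¹ • ∑ r, piKron (M r) ≤ ((n : ℝ) + 1) • (piKron Q + η • 1) := by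
  set s := (Fintype.card R : 𝕜)⁻¹ • ∑ r, piKron (M r)
  have hc : (0 : 𝕜) ≤ (Fintype.card R : 𝕜)⁻¹ := inv_nonneg.mpr (Nat.cast_nonneg _)
  have hs0 : 0 ≤ s := smul_nonneg hc (sum_nonneg fun r _ => (isStarProjection_piKron (hM r)).nonneg)
  have hs1 : s ≤ 1 := calc
    s ≤ (Fintype.card R : 𝕜)⁻¹ • ∑ _r : R, (1 : Matrix (∀ i, X i) (∀ i, X i) 𝕜) :=
        smul_le_smul_of_nonneg_left
          (sum_le_sum fun r _ => (isStarProjection_piKron (hM r)).le_one) hc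
    _ = 1 := by
        rw [sum_const, card_univ, ← Nat.cast_smul_eq_nsmul 𝕜, smul_smul,
          inv_mul_cancel₀ (Nat.cast_ne_zero.mpr Fintype.card_ne_zero), one_smul]
  have hslot : ∀ k, s ≤ piKronSingle k (P k) := fun k => by
    rw [hP k, map_smul, map_sum]
    exact smul_le_smul_of_nonneg_left (sum_le_sum fun r _ => piKron_le_piKronSingle (hM r) k) hc
  have hprefix : ∀ m : Fin n, ∀ i, IsStarProjection (if i < m then Q i else 1) := fun m i => by
    split_ifs
    exacts [hQ i, .one _]
  have hf : (1 - piKron Q) * s * (1 - piKron Q) ≤ ((n : ℝ) * η) • 1 := by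
    rw [← sum_piKron_update_one_sub]
    calc _ ≤ (#(univ : Finset (Fin n)) * η) • ∑ m : Fin n,
            piKron (update (fun i => if i < m then Q i else 1) m (1 - Q m)) :=
          sum_mul_mul_sum_le_smul_sum univ hs0
            (fun m _ => (isStarProjection_piKron_update (hprefix m) (hQ m).one_sub).isSelfAdjoint)
            (fun m _ => piKron_update_mul_mul_le (hslot m) (hQ m) (hPQ m) (hprefix m))
      _ ≤ ((n : ℝ) * η) • 1 := by
          rw [card_univ, Fintype.card_fin, sum_piKron_update_one_sub]
          exact smul_le_smul_of_nonneg_left (isStarProjection_piKron hQ).one_sub.le_one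
            (by positivity)
  exact le_smul_add_of_compress_le hs0 (isStarProjection_piKron hQ) hs1 (Nat.cast_pos.mpr hn) hf

end Average

end Matrix

open Matrix

theorem stmt9_general {n : ℕ} (hn : 1 ≤ n) (X : Fin n → Type)
    [∀ i, Fintype (X i)] [∀ i, DecidableEq (X i)]
    {R : Type} [Fintype R] [Nonempty R]
    (M : R → (i : Fin n) → Matrix (X i) (X i) ℂ)
    (hMherm : ∀ r i, (M r i).IsHermitian)
    (hMidem : ∀ r i, M r i * M r i = M r i)
    (Pm : (i : Fin n) → Matrix (X i) (X i) ℂ)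
    (hPm : ∀ i, Pm i = ((Fintype.card R : ℂ))⁻¹ • ∑ r : R, M r i)
    (η : ℝ) (hη0 : 0 ≤ η)
    (Pj : (i : Fin n) → Matrix (X i) (X i) ℂ)
    (hPj : ∀ i, ∃ (U : Matrix (X i) (X i) ℂ) (μ : X i → ℝ),
      U ∈ Matrix.unitaryGroup (X i) ℂ ∧
      Pm i = U * Matrix.diagonal (fun a => (μ a : ℂ)) * U.conjTranspose ∧
      Pj i = U * Matrix.diagonal (fun a => if η < μ a then (1 : ℂ) else 0) * U.conjTranspose)
    (tensM : ((i : Fin n) → Matrix (X i) (X i) ℂ) →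
      Matrix ((i : Fin n) → X i) ((i : Fin n) → X i) ℂ)
    (htensM : ∀ A xx yy, tensM A xx yy = ∏ i, A i (xx i) (yy i))
    (ρ : Matrix ((i : Fin n) → X i) ((i : Fin n) → X i) ℂ)
    (hρ : ρ.PosSemidef) (hρtr : ρ.trace = 1) :
    (∑ r : R, ((tensM (M r) * ρ * tensM (M r)).trace).re) / (Fintype.card R : ℝ)
      ≤ ((n : ℝ) + 1) * (η + ((tensM Pj * ρ).trace).re) := by
  have hT : tensM = piKron := funext fun A => ext fun x y => htensM A x y
  have hM : ∀ r i, IsStarProjection (M r i) := fun r i => ⟨hMidem r i, hMherm r i⟩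
  have hspec : ∀ i, IsStarProjection (Pj i) ∧
      (1 - Pj i) * Pm i * (1 - Pj i) ≤ η • (1 - Pj i) := fun i => by
    obtain ⟨U, μ, hU, hP, hQ⟩ := hPj i
    exact isStarProjection_and_compress_le_of_eq_conj_diagonal hU hP hQ
  have hop := inv_card_smul_sum_piKron_le hn hM hPm (fun i => (hspec i).1) hη0
    (fun i => (hspec i).2)
  have htr := (Complex.le_def.mp (trace_mul_le_trace_mul hop hρ)).1
  have hcycle : ∀ r, (piKron (M r) * ρ * piKron (M r)).trace = (piKron (M r) * ρ).trace :=
    fun r => by rw [trace_mul_cycle, (isStarProjection_piKron (hM r)).isIdempotentElem.eq]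
  subst hT
  simp only [hcycle]
  convert htr using 1
  · simp [sum_mul, trace_sum, div_eq_inv_mul]
  · simp only [Matrix.smul_mul, Matrix.add_mul, one_mul, trace_smul, trace_add, hρtr,
      Complex.smul_re, Complex.add_re, Complex.one_re, smul_eq_mul]
    ring

/-- mixed-state version of Statement 8: with `M_r^{(i)}`, `P^{(i)}`, `η`, and
the spectral projections `Π^{(i)}` as before, for every density matrix `ρ` (Hermitian PSD,
trace 1) on `ℂ^{X_1×⋯×X_n}`:
`(1/|R|)·Σ_r Tr[(⊗_i M_r^{(i)}) ρ (⊗_i M_r^{(i)})] ≤ (n+1)·(η + Tr[(⊗_i Π^{(i)}) ρ])`. -/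
theorem stmt9 {n : ℕ} (hn : 1 ≤ n) (X : Fin n → Type)
    [∀ i, Fintype (X i)] [∀ i, DecidableEq (X i)] [∀ i, Nonempty (X i)]
    {R : Type} [Fintype R] [Nonempty R]
    (M : R → (i : Fin n) → Matrix (X i) (X i) ℂ)
    (hMherm : ∀ r i, (M r i).IsHermitian)
    (hMidem : ∀ r i, M r i * M r i = M r i)
    (Pm : (i : Fin n) → Matrix (X i) (X i) ℂ)
    (hPm : ∀ i, Pm i = ((Fintype.card R : ℂ))⁻¹ • ∑ r : R, M r i)
    (η : ℝ) (hη0 : 0 ≤ η) (hη1 : η ≤ 1)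
    (Pj : (i : Fin n) → Matrix (X i) (X i) ℂ)
    (hPj : ∀ i, ∃ (U : Matrix (X i) (X i) ℂ) (μ : X i → ℝ),
      U ∈ Matrix.unitaryGroup (X i) ℂ ∧
      Pm i = U * Matrix.diagonal (fun a => (μ a : ℂ)) * U.conjTranspose ∧
      Pj i = U * Matrix.diagonal (fun a => if η < μ a then (1 : ℂ) else 0) * U.conjTranspose)
    (tensM : ((i : Fin n) → Matrix (X i) (X i) ℂ) →
      Matrix ((i : Fin n) → X i) ((i : Fin n) → X i) ℂ)
    (htensM : ∀ A xx yy, tensM A xx yy = ∏ i, A i (xx i) (yy i))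
    (ρ : Matrix ((i : Fin n) → X i) ((i : Fin n) → X i) ℂ)
    (hρ : ρ.PosSemidef) (hρtr : ρ.trace = 1) :
    (∑ r : R, ((tensM (M r) * ρ * tensM (M r)).trace).re) / (Fintype.card R : ℝ)
      ≤ ((n : ℝ) + 1) * (η + ((tensM Pj * ρ).trace).re) :=
  stmt9_general hn X M hMherm hMidem Pm hPm η hη0 Pj hPj tensM htensM ρ hρ hρtr
end
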